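/- arXiv:0710.4991 — 4 statements merged into one kernel-verified Lean document; each statement's English description precedes it below -/
import Mathlib

section
/- For a squarefree positive integer m with m ≡ 3 (mod 4), the equation x² + x·y + ((1+m)/4)·y² = 2 has a solution in integers x, y if and only if m = 7. -/
/-!
Completing the square, `4 (x² + xy + ((1+m)/4) y²) = (2x + y)² + m y²`, so a solution gives
`a² + m y² = 8`. Since `m ≥ 3`, this forces `y² ≤ 1`; `y = 0` leaves `a² = 8`, and `y = ±1` leaves
`a² = 8 - m ∈ {5, 1}`, of which only `m = 7` is a square.
-/

theorem four_mul_norm_eq_sq_add {m k x y n : ℤ} (hk : 4 * k = 1 + m)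
    (h : x ^ 2 + x * y + k * y ^ 2 = n) : (2 * x + y) ^ 2 + m * y ^ 2 = 4 * n := by
  linear_combination 4 * h - y ^ 2 * hk

theorem eq_seven_of_sq_add_mul_sq_eq_eight {m a y : ℤ} (hm : 0 < m) (hm4 : m % 4 = 3)
    (h : a ^ 2 + m * y ^ 2 = 8) : m = 7 := by
  have hm3 : 3 ≤ m := by omega
  have hy : y ^ 2 ≤ 2 := by nlinarith [sq_nonneg a, sq_nonneg y]
  obtain ⟨hy_lb, hy_ub⟩ : -1 ≤ y ∧ y ≤ 1 := abs_le.mp (by nlinarith [sq_abs y, abs_nonneg y])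
  have ha : a ^ 2 ≤ 8 := by nlinarith [sq_nonneg y]
  obtain ⟨ha_lb, ha_ub⟩ : -2 ≤ a ∧ a ≤ 2 := abs_le.mp (by nlinarith [sq_abs a, abs_nonneg a])
  interval_cases a <;> interval_cases y <;> omega

theorem stmt_1_general (m : ℕ) (hmod : m % 4 = 3) :
    (∃ x y : ℤ, x ^ 2 + x * y + ((1 + (m : ℤ)) / 4) * y ^ 2 = 2) ↔ m = 7 := by
  constructor
  · rintro ⟨x, y, h⟩
    have hk : 4 * ((1 + (m : ℤ)) / 4) = 1 + m := by omega
    exact_mod_cast eq_seven_of_sq_add_mul_sq_eq_eight (by omega) (by omega)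
      (four_mul_norm_eq_sq_add hk h)
  · rintro rfl
    exact ⟨0, 1, by norm_num⟩

theorem stmt_1 (m : ℕ) (hm : 0 < m) (hsf : Squarefree m) (hmod : m % 4 = 3) :
    (∃ x y : ℤ, x ^ 2 + x * y + ((1 + (m : ℤ)) / 4) * y ^ 2 = 2) ↔ m = 7 :=
  stmt_1_general m hmod
end

section
/- The quadratic form x² + 2y² + 4z² over ℤ represents every positive integer except those of the form 2^d·u with d odd and u ≡ 7 (mod 8). -/
/-!
Since `(x + 2z)² + (x - 2z)² + (2y)² = 2(x² + 2y² + 4z²)`, and every representation of `2n` as a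
sum of three squares can be brought into this shape by permuting and changing signs, `n` is
represented by `x² + 2y² + 4z²` iff `2n` is a sum of three squares. The theorem is therefore
Legendre's three-square theorem for `2n`, which we prove along the lines of Dirichlet.

Numbers `4ᵏ(8l + 7)` are not sums of three squares, since squares are `0, 1, 4 mod 8`. Conversely,
for `n` with `4 ∤ n` and `n ≢ 7 (mod 8)`, Dirichlet's theorem on primes in arithmetic progressions
and quadratic reciprocity give `q > 0` and `B` with `n ∣ q + 1` and `q ∣ B² + n`. These are the
data of a positive definite integral ternary form of determinant `1` whose first diagonal entry
is `n`. By Hermite's reduction, such a form is `x² + y² + z²` after a unimodular change of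
variables. Move a minimal vector to the first basis vector and complete the square. The binary
form left over has minimum at least `3m²/4`, where `m` is the minimum of the ternary form, and it
has determinant `m`. Hermite's bound for binary forms then gives `m = 1`, and the form splits off
a square.
-/

open Matrix

namespace Matrix

section Unimodular

variable {n R : Type*} [Fintype n] [CommRing R]

lemma transpose_mul_mul_dotProduct_mulVec (A U : Matrix n n R) (v : n → R) :
    v ⬝ᵥ (Uᵀ * A * U) *ᵥ v = (U *ᵥ v) ⬝ᵥ A *ᵥ (U *ᵥ v) := by
  rw [← mulVec_mulVec, ← mulVec_mulVec, mulVec_transpose, dotProduct_comm, ← dotProduct_mulVec,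
    dotProduct_comm]

variable [DecidableEq n]

lemma transvection_mulVec (i j : n) (c : R) (v : n → R) :
    transvection i j c *ᵥ v = v + Pi.single i (c * v j) := by
  rw [transvection, add_mulVec, one_mulVec, single_mulVec, ← Pi.single]

lemma mulVec_ne_zero_of_isUnit {U : Matrix n n R} (hU : IsUnit U)
    {v : n → R} (hv : v ≠ 0) : U *ᵥ v ≠ 0 :=
  fun h => hv (mulVec_injective_of_isUnit hU (h.trans (mulVec_zero U).symm))

theorem exists_isUnit_mulVec_single_eq (i₀ : n) (u : n → ℤ) :
    ∃ U : Matrix n n ℤ, IsUnit U ∧ ∃ d : ℤ, U *ᵥ Pi.single i₀ d = u := by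
  -- Euclid's algorithm on the coordinates of `u`, each division step being a transvection.
  induction h : ∑ i, (u i).natAbs using Nat.strong_induction_on generalizing u with
  | _ N ih =>
  by_cases hpair : ∃ i j, i ≠ j ∧ u i ≠ 0 ∧ u j ≠ 0
  · obtain ⟨i, j, hij, hi, hj⟩ := hpair
    wlog hle : (u i).natAbs ≤ (u j).natAbs generalizing i j
    · exact this j i hij.symm hj hi (le_of_not_ge hle)
    set q := u j / u i
    set u' := u - Pi.single j (q * u i)
    have hj' : u' j = u j % u i := by simp [u', q, Int.emod_def, mul_comm]
    have hlt : ∑ k, (u' k).natAbs < N := by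
      rw [← h]
      refine Finset.sum_lt_sum (fun k _ => ?_) ⟨j, Finset.mem_univ _, ?_⟩
      · rcases eq_or_ne k j with rfl | hk
        · rw [hj']; have := Int.emod_lt (u k) hi; have := Int.emod_nonneg (u k) hi; omega
        · simp [u', hk]
      · rw [hj']; have := Int.emod_lt (u j) hi; have := Int.emod_nonneg (u j) hi; omega
    obtain ⟨U, hU, d, hd⟩ := ih _ hlt u' rfl
    refine ⟨transvection j i q * U, ?_, d, ?_⟩
    · refine ((isUnit_iff_isUnit_det _).2 ?_).mul hU
      rw [det_transvection_of_ne _ _ hij.symm]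
      exact isUnit_one
    · rw [← mulVec_mulVec, hd, transvection_mulVec]
      simp [u', hij]
  · push Not at hpair
    obtain ⟨k, hk⟩ : ∃ k, ∀ j ≠ k, u j = 0 := by
      by_cases hu : u = 0
      · exact ⟨i₀, fun j _ => by simp [hu]⟩
      obtain ⟨k, hk⟩ := Function.ne_iff.1 hu
      exact ⟨k, fun j hj => hpair k j hj.symm hk⟩
    refine ⟨(Equiv.swap i₀ k).permMatrix ℤ, ?_, u k, ?_⟩
    · rw [isUnit_iff_isUnit_det, det_permutation]
      simp
    · rw [permMatrix_mulVec, Pi.single_comp_equiv]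
      ext j
      rcases eq_or_ne j k with rfl | hj
      · simp
      · simp [hk j hj, hj]

lemma exists_eq_transpose_mul_self_of_isUnit {A U : Matrix n n R} (hU : IsUnit U)
    (h : ∃ P : Matrix n n R, Uᵀ * A * U = Pᵀ * P) : ∃ P : Matrix n n R, A = Pᵀ * P := by
  obtain ⟨P, hP⟩ := h
  refine ⟨P * U⁻¹, ?_⟩
  have hU' : U * U⁻¹ = 1 := mul_nonsing_inv U ((isUnit_iff_isUnit_det U).1 hU)
  calc A = (U * U⁻¹)ᵀ * A * (U * U⁻¹) := by simp [hU']
    _ = (U⁻¹)ᵀ * (Uᵀ * A * U) * U⁻¹ := by simp only [transpose_mul, Matrix.mul_assoc]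
    _ = (P * U⁻¹)ᵀ * (P * U⁻¹) := by simp only [hP, transpose_mul, Matrix.mul_assoc]

lemma det_transpose_mul_mul_of_isUnit {U : Matrix n n ℤ} (hU : IsUnit U) (A : Matrix n n ℤ) :
    (Uᵀ * A * U).det = A.det := by
  rcases Int.isUnit_iff.1 ((isUnit_iff_isUnit_det U).1 hU) with h | h <;> simp [h]

variable {A U : Matrix n n ℤ}

lemma posDef_transpose_mul_mul_iff (hU : IsUnit U) : (Uᵀ * A * U).PosDef ↔ A.PosDef := by
  rw [← conjTranspose_eq_transpose_of_trivial]
  exact IsUnit.posDef_star_left_conjugate_iff hU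

theorem PosDef.exists_isUnit_apply_le (hA : A.PosDef) (i₀ : n) :
    ∃ U : Matrix n n ℤ, IsUnit U ∧ ∀ v ≠ 0, (Uᵀ * A * U) i₀ i₀ ≤ v ⬝ᵥ (Uᵀ * A * U) *ᵥ v := by
  have hpos : ∀ v ≠ 0, 0 < v ⬝ᵥ A *ᵥ v := fun v hv => by
    simpa using hA.dotProduct_mulVec_pos hv
  obtain ⟨M, ⟨u, hu, rfl⟩, hmin⟩ := Int.exists_least_of_bdd
    (P := fun m => ∃ v ≠ 0, v ⬝ᵥ A *ᵥ v = m)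
    ⟨0, fun _ ⟨v, hv, hm⟩ => hm ▸ (hpos v hv).le⟩ ⟨_, Pi.single i₀ 1, by simp, rfl⟩
  -- The minimal vector is `U (d • e_{i₀})`, and its value `d² (Uᵀ A U) i₀ i₀` is at least
  -- `(Uᵀ A U) i₀ i₀`.
  obtain ⟨U, hU, d, rfl⟩ := exists_isUnit_mulVec_single_eq i₀ u
  refine ⟨U, hU, fun v hv => ?_⟩
  rw [transpose_mul_mul_dotProduct_mulVec]
  refine le_trans ?_ (hmin _ ⟨_, mulVec_ne_zero_of_isUnit hU hv, rfl⟩)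
  have hval : (U *ᵥ Pi.single i₀ d) ⬝ᵥ A *ᵥ (U *ᵥ Pi.single i₀ d) =
      d ^ 2 * (Uᵀ * A * U) i₀ i₀ := by
    rw [← transpose_mul_mul_dotProduct_mulVec]
    simp [sq, mul_assoc]
  have hd : d ≠ 0 := by rintro rfl; simp at hu
  have hB : 0 < (Uᵀ * A * U) i₀ i₀ := ((posDef_transpose_mul_mul_iff hU).2 hA).diag_pos
  have hd2 : 0 < d ^ 2 := by positivity
  rw [hval]
  nlinarith

end Unimodular

end Matrix

lemma Int.exists_four_mul_sq_add_mul_le (a : ℤ) {m : ℤ} (hm : 0 < m) :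
    ∃ t : ℤ, 4 * (a + t * m) ^ 2 ≤ m ^ 2 := by
  have h0 := Int.emod_nonneg a hm.ne'
  have h1 := Int.emod_lt_of_pos a hm
  have h2 := Int.emod_add_mul_ediv a m
  rcases le_or_gt (2 * (a % m)) m with h | h
  · exact ⟨-(a / m), by nlinarith⟩
  · exact ⟨-(a / m) - 1, by nlinarith⟩

namespace Matrix

lemma IsHermitian.apply_one_zero {A : Matrix (Fin 2) (Fin 2) ℤ} (hA : A.IsHermitian) :
    A 1 0 = A 0 1 := by
  simpa using hA.apply 0 1

lemma dotProduct_mulVec_fin_two {A : Matrix (Fin 2) (Fin 2) ℤ} (hA : A.IsHermitian) (y z : ℤ) :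
    ![y, z] ⬝ᵥ A *ᵥ ![y, z] = A 0 0 * y ^ 2 + 2 * A 0 1 * y * z + A 1 1 * z ^ 2 := by
  simp [dotProduct, mulVec, Fin.sum_univ_two, hA.apply_one_zero]
  ring

lemma PosDef.three_mul_sq_le_four_mul_det {A : Matrix (Fin 2) (Fin 2) ℤ} (hA : A.PosDef)
    (hmin : ∀ v ≠ 0, A 0 0 ≤ v ⬝ᵥ A *ᵥ v) : 3 * A 0 0 ^ 2 ≤ 4 * A.det := by
  obtain ⟨t, ht⟩ := Int.exists_four_mul_sq_add_mul_le (A 0 1) hA.diag_pos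
  -- `A 0 0 * Q(t, 1) = (A 0 0 * t + A 0 1)² + det A`
  have hv := hmin ![t, 1] (by simp)
  rw [dotProduct_mulVec_fin_two hA.isHermitian] at hv
  rw [det_fin_two, hA.isHermitian.apply_one_zero]
  nlinarith [hA.diag_pos (i := 0)]

lemma PosDef.exists_three_mul_sq_le_four_mul_det {A : Matrix (Fin 2) (Fin 2) ℤ} (hA : A.PosDef) :
    ∃ v ≠ 0, 3 * (v ⬝ᵥ A *ᵥ v) ^ 2 ≤ 4 * A.det := by
  obtain ⟨U, hU, hmin⟩ := hA.exists_isUnit_apply_le 0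
  refine ⟨U *ᵥ Pi.single 0 1, mulVec_ne_zero_of_isUnit hU (by simp), ?_⟩
  have hB : (Uᵀ * A * U).PosDef := (posDef_transpose_mul_mul_iff hU).2 hA
  rw [← transpose_mul_mul_dotProduct_mulVec, ← det_transpose_mul_mul_of_isUnit hU A]
  simpa using hB.three_mul_sq_le_four_mul_det hmin

theorem PosDef.exists_eq_transpose_mul_self_of_det_eq_one_fin_two
    {A : Matrix (Fin 2) (Fin 2) ℤ} (hA : A.PosDef) (hdet : A.det = 1) :
    ∃ P : Matrix (Fin 2) (Fin 2) ℤ, A = Pᵀ * P := by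
  obtain ⟨U, hU, hmin⟩ := hA.exists_isUnit_apply_le 0
  refine exists_eq_transpose_mul_self_of_isUnit hU ?_
  set B := Uᵀ * A * U
  have hB : B.PosDef := (posDef_transpose_mul_mul_iff hU).2 hA
  have hBdet : B.det = 1 := by rw [det_transpose_mul_mul_of_isUnit hU, hdet]
  have h00 : B 0 0 = 1 := by
    have := hB.three_mul_sq_le_four_mul_det hmin
    nlinarith [hB.diag_pos (i := 0)]
  have h10 := hB.isHermitian.apply_one_zero
  refine ⟨!![1, B 0 1; 0, 1], ?_⟩
  rw [det_fin_two, h00, h10] at hBdet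
  ext i j
  fin_cases i <;> fin_cases j <;> simp [mul_apply, Fin.sum_univ_two, h00, h10]
  linarith

lemma IsHermitian.apply_fin_three {B : Matrix (Fin 3) (Fin 3) ℤ} (hB : B.IsHermitian) :
    B 1 0 = B 0 1 ∧ B 2 0 = B 0 2 ∧ B 2 1 = B 1 2 := by
  refine ⟨?_, ?_, ?_⟩ <;> simpa using hB.apply _ _

def scaledSchurComplement (B : Matrix (Fin 3) (Fin 3) ℤ) : Matrix (Fin 2) (Fin 2) ℤ :=
  !![B 0 0 * B 1 1 - B 0 1 ^ 2, B 0 0 * B 1 2 - B 0 1 * B 0 2;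
     B 0 0 * B 1 2 - B 0 1 * B 0 2, B 0 0 * B 2 2 - B 0 2 ^ 2]

lemma isHermitian_scaledSchurComplement (B : Matrix (Fin 3) (Fin 3) ℤ) :
    (scaledSchurComplement B).IsHermitian := by
  ext i j; fin_cases i <;> fin_cases j <;> rfl

lemma IsHermitian.det_scaledSchurComplement {B : Matrix (Fin 3) (Fin 3) ℤ} (hB : B.IsHermitian) :
    (scaledSchurComplement B).det = B 0 0 * B.det := by
  obtain ⟨h10, h20, h21⟩ := hB.apply_fin_three
  simp [scaledSchurComplement, det_fin_two, det_fin_three, h10, h20, h21]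
  ring

lemma IsHermitian.mul_dotProduct_mulVec_eq {B : Matrix (Fin 3) (Fin 3) ℤ} (hB : B.IsHermitian)
    (x : ℤ) (w : Fin 2 → ℤ) :
    B 0 0 * (![x, w 0, w 1] ⬝ᵥ B *ᵥ ![x, w 0, w 1]) =
      (B 0 0 * x + B 0 1 * w 0 + B 0 2 * w 1) ^ 2 + w ⬝ᵥ scaledSchurComplement B *ᵥ w := by
  obtain ⟨h10, h20, h21⟩ := hB.apply_fin_three
  simp [scaledSchurComplement, dotProduct, mulVec, Fin.sum_univ_two, Fin.sum_univ_three, h10, h20,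
    h21]
  ring

lemma PosDef.three_mul_sq_le_four_mul_scaledSchurComplement {B : Matrix (Fin 3) (Fin 3) ℤ}
    (hB : B.PosDef) (hmin : ∀ v ≠ 0, B 0 0 ≤ v ⬝ᵥ B *ᵥ v) {w : Fin 2 → ℤ} (hw : w ≠ 0) :
    3 * B 0 0 ^ 2 ≤ 4 * (w ⬝ᵥ scaledSchurComplement B *ᵥ w) := by
  obtain ⟨x, hx⟩ := Int.exists_four_mul_sq_add_mul_le (B 0 1 * w 0 + B 0 2 * w 1) hB.diag_pos
  have hne : ![x, w 0, w 1] ≠ 0 := by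
    obtain ⟨i, hi⟩ := Function.ne_iff.1 hw
    intro h0
    fin_cases i
    · exact hi (by simpa using congrFun h0 1)
    · exact hi (by simpa using congrFun h0 2)
  have h1 := hmin _ hne
  have h2 := hB.isHermitian.mul_dotProduct_mulVec_eq x w
  nlinarith [hB.diag_pos (i := 0)]

lemma PosDef.posDef_scaledSchurComplement {B : Matrix (Fin 3) (Fin 3) ℤ} (hB : B.PosDef)
    (hmin : ∀ v ≠ 0, B 0 0 ≤ v ⬝ᵥ B *ᵥ v) : (scaledSchurComplement B).PosDef := by
  refine PosDef.of_dotProduct_mulVec_pos (isHermitian_scaledSchurComplement B) fun w hw => ?_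
  have := hB.three_mul_sq_le_four_mul_scaledSchurComplement hmin hw
  rw [star_trivial]
  nlinarith [hB.diag_pos (i := 0)]

lemma PosDef.apply_zero_zero_eq_one {B : Matrix (Fin 3) (Fin 3) ℤ} (hB : B.PosDef)
    (hdet : B.det = 1) (hmin : ∀ v ≠ 0, B 0 0 ≤ v ⬝ᵥ B *ᵥ v) : B 0 0 = 1 := by
  have ha : 0 < B 0 0 := hB.diag_pos
  obtain ⟨w, hw, hSw⟩ := (hB.posDef_scaledSchurComplement hmin).exists_three_mul_sq_le_four_mul_det
  have hlow := hB.three_mul_sq_le_four_mul_scaledSchurComplement hmin hw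
  rw [hB.isHermitian.det_scaledSchurComplement, hdet, mul_one] at hSw
  -- With `m = B 0 0` and `s = w ⬝ᵥ scaledSchurComplement B *ᵥ w`, the bounds `3m² ≤ 4s` and
  -- `3s² ≤ 4m` force `27m³ ≤ 64`.
  have hsq : 9 * B 0 0 ^ 4 ≤ 16 * (w ⬝ᵥ scaledSchurComplement B *ᵥ w) ^ 2 := by nlinarith
  have h4 : B 0 0 * (27 * B 0 0 ^ 3) ≤ B 0 0 * 64 := by linarith
  have h3 := le_of_mul_le_mul_left h4 ha
  nlinarith

theorem PosDef.exists_eq_transpose_mul_self_of_det_eq_one_fin_three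
    {A : Matrix (Fin 3) (Fin 3) ℤ} (hA : A.PosDef) (hdet : A.det = 1) :
    ∃ P : Matrix (Fin 3) (Fin 3) ℤ, A = Pᵀ * P := by
  obtain ⟨U, hU, hmin⟩ := hA.exists_isUnit_apply_le 0
  refine exists_eq_transpose_mul_self_of_isUnit hU ?_
  set B := Uᵀ * A * U
  have hB : B.PosDef := (posDef_transpose_mul_mul_iff hU).2 hA
  have hBdet : B.det = 1 := by rw [det_transpose_mul_mul_of_isUnit hU, hdet]
  have h00 := hB.apply_zero_zero_eq_one hBdet hmin
  have hSdet : (scaledSchurComplement B).det = 1 := by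
    rw [hB.isHermitian.det_scaledSchurComplement, hBdet, h00, mul_one]
  obtain ⟨Q, hQ⟩ :=
    (hB.posDef_scaledSchurComplement hmin).exists_eq_transpose_mul_self_of_det_eq_one_fin_two hSdet
  have hQij (i j : Fin 2) := congrFun (congrFun hQ i) j
  simp only [scaledSchurComplement, h00, one_mul, mul_apply, Fin.sum_univ_two,
    transpose_apply] at hQij
  have e11 : B 1 1 - B 0 1 ^ 2 = Q 0 0 * Q 0 0 + Q 1 0 * Q 1 0 := by simpa using hQij 0 0
  have e12 : B 1 2 - B 0 1 * B 0 2 = Q 0 0 * Q 0 1 + Q 1 0 * Q 1 1 := by simpa using hQij 0 1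
  have e22 : B 2 2 - B 0 2 ^ 2 = Q 0 1 * Q 0 1 + Q 1 1 * Q 1 1 := by simpa using hQij 1 1
  obtain ⟨h10, h20, h21⟩ := hB.isHermitian.apply_fin_three
  refine ⟨!![1, B 0 1, B 0 2; 0, Q 0 0, Q 0 1; 0, Q 1 0, Q 1 1], ?_⟩
  ext i j
  fin_cases i <;> fin_cases j <;> simp [mul_apply, Fin.sum_univ_three, h00, h10, h20, h21]
  exacts [by linear_combination e11, by linear_combination e12, by linear_combination e12,
    by linear_combination e22]

end Matrix

lemma exists_posDef_det_eq_one_apply_zero_zero_eq {n q B : ℤ} (hn : 0 < n) (hq : 0 < q)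
    (hnq : n ∣ q + 1) (hqB : q ∣ B ^ 2 + n) :
    ∃ A : Matrix (Fin 3) (Fin 3) ℤ, A.PosDef ∧ A.det = 1 ∧ A 0 0 = n := by
  obtain ⟨g, hg⟩ := hnq
  obtain ⟨m, hm⟩ := hqB
  have hm0 : 0 < m := pos_of_mul_pos_right (hm ▸ by positivity) hq.le
  set A : Matrix (Fin 3) (Fin 3) ℤ := !![n, -B, 1; -B, m * g - 1, 0; 1, 0, g]
  have hform (v : Fin 3 → ℤ) : n * m * (v ⬝ᵥ A *ᵥ v) =
      m * (n * v 0 - B * v 1 + v 2) ^ 2 + (m * v 1 + B * v 2) ^ 2 + n * v 2 ^ 2 := by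
    simp [A, dotProduct, mulVec, Fin.sum_univ_three]
    linear_combination (-(m * v 1 ^ 2 + v 2 ^ 2) * m) * hg - (m * v 1 ^ 2 + v 2 ^ 2) * hm
  refine ⟨A, PosDef.of_dotProduct_mulVec_pos ?_ fun v hv => ?_, ?_, rfl⟩
  · ext i j; fin_cases i <;> fin_cases j <;> rfl
  · rw [star_trivial]
    by_contra! hle
    have hsum := hform v
    have h0 : 0 ≤ m * (n * v 0 - B * v 1 + v 2) ^ 2 := by positivity
    have h1 := sq_nonneg (m * v 1 + B * v 2)
    have h2 : 0 ≤ n * v 2 ^ 2 := by positivity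
    have hnm : n * m * (v ⬝ᵥ A *ᵥ v) ≤ 0 := mul_nonpos_of_nonneg_of_nonpos (by positivity) hle
    have hz : v 2 = 0 := by
      have : n * v 2 ^ 2 = 0 := by linarith
      simpa [hn.ne'] using this
    have hy : v 1 = 0 := by
      have : (m * v 1 + B * v 2) ^ 2 = 0 := by linarith
      simpa [hz, hm0.ne'] using this
    have hx : v 0 = 0 := by
      have : m * (n * v 0 - B * v 1 + v 2) ^ 2 = 0 := by linarith
      simpa [hz, hy, hm0.ne', hn.ne'] using this
    exact hv (funext fun i => by fin_cases i <;> assumption)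
  · simp [A, det_fin_three]
    linear_combination (-g * m) * hg - g * hm

theorem exists_sq_add_sq_add_sq_of_dvd {n q B : ℤ} (hn : 0 < n) (hq : 0 < q)
    (hnq : n ∣ q + 1) (hqB : q ∣ B ^ 2 + n) : ∃ a b c : ℤ, a ^ 2 + b ^ 2 + c ^ 2 = n := by
  obtain ⟨A, hA, hdet, rfl⟩ := exists_posDef_det_eq_one_apply_zero_zero_eq hn hq hnq hqB
  obtain ⟨P, rfl⟩ := hA.exists_eq_transpose_mul_self_of_det_eq_one_fin_three hdet
  exact ⟨P 0 0, P 1 0, P 2 0, by simp [mul_apply, Fin.sum_univ_three, sq]⟩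

lemma exists_dvd_sq_add_of_jacobiSym_eq_one {n : ℤ} {p : ℕ} (hp : p.Prime)
    (h : jacobiSym (-n) p = 1) : ∃ B : ℤ, (p : ℤ) ∣ B ^ 2 + n := by
  have := Fact.mk hp
  obtain ⟨r, hr⟩ := ZMod.isSquare_of_jacobiSym_eq_one h
  refine ⟨r.val, ?_⟩
  rw [← ZMod.intCast_zmod_eq_zero_iff_dvd]
  push_cast at hr ⊢
  rw [ZMod.natCast_zmod_val]
  linear_combination -hr

lemma jacobiSym_neg_eq_one_of_modEq_neg_one {m p : ℕ} (hm : m % 4 = 1) (hp : p % 4 = 1)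
    (hpm : (p : ℤ) ≡ -1 [ZMOD m]) : jacobiSym (-m) p = 1 := by
  rw [neg_eq_neg_one_mul, jacobiSym.mul_left, jacobiSym.at_neg_one (Nat.odd_iff.2 (by omega)),
    ZMod.χ₄_nat_one_mod_four hp, jacobiSym.quadratic_reciprocity_one_mod_four hm
      (Nat.odd_iff.2 (by omega)), jacobiSym.mod_left' hpm,
    jacobiSym.at_neg_one (Nat.odd_iff.2 (by omega)), ZMod.χ₄_nat_one_mod_four hm, one_mul]

lemma jacobiSym_neg_eq_neg_one_of_modEq_neg_one {m p : ℕ} (hm : Odd m) (hp : p % 4 = 3)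
    (hpm : (p : ℤ) ≡ -1 [ZMOD m]) : jacobiSym (-m) p = -1 := by
  rw [neg_eq_neg_one_mul, jacobiSym.mul_left, jacobiSym.at_neg_one (Nat.odd_iff.2 (by omega)),
    ZMod.χ₄_nat_three_mod_four hp]
  rcases Nat.odd_mod_four_iff.1 (Nat.odd_iff.1 hm) with h | h
  · rw [jacobiSym.quadratic_reciprocity_one_mod_four h (Nat.odd_iff.2 (by omega)),
      jacobiSym.mod_left' hpm, jacobiSym.at_neg_one hm, ZMod.χ₄_nat_one_mod_four h]
    norm_num
  · rw [jacobiSym.quadratic_reciprocity_three_mod_four h hp, jacobiSym.mod_left' hpm,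
      jacobiSym.at_neg_one hm, ZMod.χ₄_nat_three_mod_four h]
    norm_num

lemma exists_dvd_of_mod_four_eq_one_or_two {n : ℕ} (hn : n % 4 = 1 ∨ n % 4 = 2) :
    ∃ q B : ℤ, 0 < q ∧ (n : ℤ) ∣ q + 1 ∧ q ∣ B ^ 2 + n := by
  -- `q = p ≡ 2n - 1 (mod 4n)`: then `p ≡ -1 (mod n)`, and `p ≡ 1 (mod 4)` if `n ≡ 1 (mod 4)`
  -- while `p ≡ 3 (mod 8)` if `n ≡ 2 (mod 4)`.
  obtain ⟨p, -, hp, hpa⟩ := Nat.forall_exists_prime_gt_and_zmodEq 0 (q := 4 * n)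
    (a := 2 * n - 1) (by omega) ⟨-(2 * n + 1), n, by push_cast; ring⟩
  push_cast at hpa
  have hpn : (p : ℤ) ≡ -1 [ZMOD n] :=
    (hpa.of_mul_left 4).trans (Int.modEq_iff_dvd.2 ⟨-2, by ring⟩)
  have hJ : jacobiSym (-n) p = 1 := by
    rcases hn with hn | hn
    · have hp4 : p % 4 = 1 := by have := hpa.of_mul_right n; unfold Int.ModEq at this; omega
      exact jacobiSym_neg_eq_one_of_modEq_neg_one hn hp4 hpn
    · obtain ⟨m, rfl⟩ : ∃ m, n = 2 * m := ⟨n / 2, by omega⟩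
      have hp8 : p % 8 = 3 := by
        have := hpa.of_dvd (⟨m, by push_cast; ring⟩ : (8 : ℤ) ∣ 4 * (2 * m : ℕ))
        push_cast at this; unfold Int.ModEq at this; omega
      push_cast
      rw [show -(2 * (m : ℤ)) = 2 * -(m : ℤ) by ring, jacobiSym.mul_left,
        jacobiSym.at_two (Nat.odd_iff.2 (by omega)), ZMod.χ₈_nat_eq_if_mod_eight,
        jacobiSym_neg_eq_neg_one_of_modEq_neg_one (Nat.odd_iff.2 (by omega)) (by omega)
          (by push_cast at hpn; exact hpn.of_mul_left 2)]
      simp [hp8, show p % 2 = 1 by omega]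
  obtain ⟨B, hB⟩ := exists_dvd_sq_add_of_jacobiSym_eq_one hp hJ
  exact ⟨p, B, by exact_mod_cast hp.pos, by simpa using hpn.symm.dvd, hB⟩

lemma exists_dvd_of_mod_eight_eq_three {n : ℕ} (hn : n % 8 = 3) :
    ∃ q B : ℤ, 0 < q ∧ (n : ℤ) ∣ q + 1 ∧ q ∣ B ^ 2 + n := by
  -- `q = 2p` with `p ≡ (n - 1) / 2 = 4j + 1 (mod 4n)`, so that `2p ≡ -1 (mod n)` and
  -- `p ≡ 1 (mod 4)`.
  obtain ⟨j, hj⟩ : ∃ j : ℤ, (n : ℤ) = 8 * j + 3 := ⟨n / 8, by omega⟩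
  obtain ⟨p, -, hp, hpa⟩ := Nat.forall_exists_prime_gt_and_zmodEq 0 (q := 4 * n)
    (a := 4 * j + 1) (by omega) ⟨8 * j + 1, -j, by push_cast; rw [hj]; ring⟩
  push_cast at hpa
  have hp4 : p % 4 = 1 := by
    have := hpa.of_dvd (dvd_mul_right _ _); unfold Int.ModEq at this; omega
  have hodd : Odd n := Nat.odd_iff.2 (by omega)
  have h2p : 2 * (p : ℤ) ≡ -1 [ZMOD n] :=
    ((hpa.of_dvd (dvd_mul_left _ _)).mul_left 2).trans (Int.modEq_iff_dvd.2 ⟨-1, by rw [hj]; ring⟩)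
  have hJ : jacobiSym (-n) p = 1 := by
    have h2 : jacobiSym 2 n = -1 := by
      rw [jacobiSym.at_two hodd, ZMod.χ₈_nat_eq_if_mod_eight]; simp [hn, show n % 2 = 1 by omega]
    have hprod := jacobiSym.mul_left 2 p n
    rw [jacobiSym.mod_left' h2p, jacobiSym.at_neg_one hodd,
      ZMod.χ₄_nat_three_mod_four (by omega), h2] at hprod
    rw [neg_eq_neg_one_mul, jacobiSym.mul_left, jacobiSym.at_neg_one (Nat.odd_iff.2 (by omega)),
      ZMod.χ₄_nat_one_mod_four hp4, one_mul, jacobiSym.quadratic_reciprocity_one_mod_four' hodd hp4]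
    linarith
  obtain ⟨B, hB⟩ := exists_dvd_sq_add_of_jacobiSym_eq_one hp hJ
  -- `2p ∣ B² + n` also needs `B` odd; `B + p` is another root.
  obtain ⟨B, hB, hBodd⟩ : ∃ B : ℤ, (p : ℤ) ∣ B ^ 2 + n ∧ Odd B := by
    rcases Int.even_or_odd B with hBe | hBo
    · refine ⟨B + p, ?_, hBe.add_odd (by exact_mod_cast hp.odd_of_ne_two (by omega))⟩
      rw [show (B + p) ^ 2 + n = B ^ 2 + n + p * (2 * B + p) by ring]
      exact dvd_add hB (dvd_mul_right _ _)
    · exact ⟨B, hB, hBo⟩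
  have h2B : (2 : ℤ) ∣ B ^ 2 + n := (hBodd.pow.add_odd (by exact_mod_cast hodd)).two_dvd
  refine ⟨2 * p, B, by have := hp.pos; omega, by simpa using h2p.symm.dvd, ?_⟩
  exact (Int.isCoprime_two_left.2 (by exact_mod_cast hp.odd_of_ne_two (by omega))).mul_dvd h2B hB

lemma exists_dvd_of_mod_four_ne_zero_of_mod_eight_ne_seven {n : ℕ} (h4 : n % 4 ≠ 0)
    (h7 : n % 8 ≠ 7) : ∃ q B : ℤ, 0 < q ∧ (n : ℤ) ∣ q + 1 ∧ q ∣ B ^ 2 + n := by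
  by_cases h : n % 4 = 1 ∨ n % 4 = 2
  · exact exists_dvd_of_mod_four_eq_one_or_two h
  · exact exists_dvd_of_mod_eight_eq_three (by omega)

lemma Int.sq_emod_cases (x : ℤ) :
    x % 2 = 0 ∧ x ^ 2 % 4 = 0 ∨ x % 2 = 1 ∧ x ^ 2 % 8 = 1 := by
  rcases Int.even_or_odd' x with ⟨k, rfl | rfl⟩
  · exact Or.inl ⟨by omega, by rw [show (2 * k) ^ 2 = 4 * k ^ 2 by ring]; omega⟩
  · obtain ⟨l, hl⟩ := Int.even_mul_succ_self k
    refine Or.inr ⟨by omega, ?_⟩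
    rw [show (2 * k + 1) ^ 2 = 8 * l + 1 by linear_combination 4 * hl]
    omega

lemma sq_add_sq_add_sq_ne_eight_mul_add_seven (a b c l : ℤ) :
    a ^ 2 + b ^ 2 + c ^ 2 ≠ 8 * l + 7 := by
  have := Int.sq_emod_cases a
  have := Int.sq_emod_cases b
  have := Int.sq_emod_cases c
  omega

lemma exists_sq_add_sq_add_sq_of_four_mul {a b c m : ℤ} (h : a ^ 2 + b ^ 2 + c ^ 2 = 4 * m) :
    ∃ a' b' c' : ℤ, a' ^ 2 + b' ^ 2 + c' ^ 2 = m := by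
  have := Int.sq_emod_cases a
  have := Int.sq_emod_cases b
  have := Int.sq_emod_cases c
  obtain ⟨a', rfl⟩ : ∃ a', a = 2 * a' := ⟨a / 2, by omega⟩
  obtain ⟨b', rfl⟩ : ∃ b', b = 2 * b' := ⟨b / 2, by omega⟩
  obtain ⟨c', rfl⟩ : ∃ c', c = 2 * c' := ⟨c / 2, by omega⟩
  exact ⟨a', b', c', by linarith⟩

theorem exists_sq_add_sq_add_sq_iff (m : ℕ) :
    (∃ a b c : ℤ, a ^ 2 + b ^ 2 + c ^ 2 = m) ↔ ¬ ∃ k l : ℕ, m = 4 ^ k * (8 * l + 7) := by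
  constructor
  · rintro ⟨a, b, c, h⟩ ⟨k, l, rfl⟩
    induction k generalizing a b c with
    | zero => exact sq_add_sq_add_sq_ne_eight_mul_add_seven a b c l (by push_cast at h; linarith)
    | succ k ih =>
      obtain ⟨a', b', c', h'⟩ := exists_sq_add_sq_add_sq_of_four_mul
        (m := (4 ^ k * (8 * l + 7) : ℕ)) (h.trans (by push_cast; ring))
      exact ih a' b' c' (by exact_mod_cast h')
  · intro h
    rcases eq_or_ne m 0 with rfl | hm
    · exact ⟨0, 0, 0, by simp⟩
    obtain ⟨k, m', hm'4, rfl⟩ := Nat.exists_eq_pow_mul_and_not_dvd hm 4 (by norm_num)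
    have hm'7 : m' % 8 ≠ 7 := fun h7 => h ⟨k, m' / 8, by rw [← h7, Nat.div_add_mod]⟩
    obtain ⟨q, B, hq, hmq, hqB⟩ :=
      exists_dvd_of_mod_four_ne_zero_of_mod_eight_ne_seven (by omega) hm'7
    obtain ⟨a, b, c, habc⟩ := exists_sq_add_sq_add_sq_of_dvd (by omega) hq hmq hqB
    refine ⟨2 ^ k * a, 2 ^ k * b, 2 ^ k * c, ?_⟩
    push_cast
    rw [← habc, show (4 : ℤ) ^ k = (2 ^ k) ^ 2 by rw [← pow_mul, mul_comm, pow_mul]; norm_num]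
    ring

lemma exists_sq_add_two_mul_sq_add_four_mul_sq_of_dvd {a b c n : ℤ}
    (h : a ^ 2 + b ^ 2 + c ^ 2 = 2 * n) (hab : 4 ∣ a - b) (hc : 2 ∣ c) :
    ∃ x y z : ℤ, x ^ 2 + 2 * y ^ 2 + 4 * z ^ 2 = n := by
  obtain ⟨z, hz⟩ := hab
  obtain ⟨y, rfl⟩ := hc
  obtain rfl : a = b + 4 * z := by linarith
  exact ⟨b + 2 * z, y, z, by linarith⟩

lemma exists_sq_add_two_mul_sq_add_four_mul_sq_iff (n : ℤ) :
    (∃ x y z : ℤ, x ^ 2 + 2 * y ^ 2 + 4 * z ^ 2 = n) ↔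
      ∃ a b c : ℤ, a ^ 2 + b ^ 2 + c ^ 2 = 2 * n := by
  constructor
  · rintro ⟨x, y, z, h⟩
    exact ⟨x + 2 * z, x - 2 * z, 2 * y, by linear_combination 2 * h⟩
  · rintro ⟨a, b, c, h⟩
    -- An even sum of three squares has zero or two odd terms, so two of `±a, ±b, ±c` are
    -- congruent mod 4 and the remaining one is even.
    have hcases : (4 ∣ a - b ∧ 2 ∣ c) ∨ (4 ∣ a - -b ∧ 2 ∣ c) ∨ (4 ∣ a - c ∧ 2 ∣ b) ∨
        (4 ∣ a - -c ∧ 2 ∣ b) ∨ (4 ∣ b - c ∧ 2 ∣ a) ∨ (4 ∣ b - -c ∧ 2 ∣ a) := by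
      have := Int.sq_emod_cases a
      have := Int.sq_emod_cases b
      have := Int.sq_emod_cases c
      omega
    rcases hcases with ⟨h1, h2⟩ | ⟨h1, h2⟩ | ⟨h1, h2⟩ | ⟨h1, h2⟩ | ⟨h1, h2⟩ | ⟨h1, h2⟩ <;>
      exact exists_sq_add_two_mul_sq_add_four_mul_sq_of_dvd (by linear_combination h) h1 h2

lemma exists_two_mul_eq_four_pow_mul_iff (n : ℕ) :
    (∃ k l : ℕ, 2 * n = 4 ^ k * (8 * l + 7)) ↔ ∃ d u : ℕ, Odd d ∧ u % 8 = 7 ∧ n = 2 ^ d * u := by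
  rw [show (4 : ℕ) = 2 ^ 2 by norm_num]
  simp_rw [← pow_mul]
  constructor
  · rintro ⟨_ | k, l, h⟩
    · omega
    · refine ⟨2 * k + 1, 8 * l + 7, odd_two_mul_add_one k, by omega, ?_⟩
      rw [show 2 * (k + 1) = 2 * k + 1 + 1 by ring, pow_succ] at h
      linarith
  · rintro ⟨d, u, ⟨k, rfl⟩, hu, rfl⟩
    refine ⟨k + 1, u / 8, ?_⟩
    rw [← hu, Nat.div_add_mod]
    ring

theorem stmt_7_general (n : ℕ) :
    (¬ ∃ x y z : ℤ, x ^ 2 + 2 * y ^ 2 + 4 * z ^ 2 = (n : ℤ)) ↔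
      ∃ d u : ℕ, Odd d ∧ u % 8 = 7 ∧ n = 2 ^ d * u := by
  rw [exists_sq_add_two_mul_sq_add_four_mul_sq_iff, ← exists_two_mul_eq_four_pow_mul_iff]
  exact_mod_cast (exists_sq_add_sq_add_sq_iff (2 * n)).not_left

theorem stmt_7 (n : ℕ) (hn : 0 < n) :
    (¬ ∃ x y z : ℤ, x ^ 2 + 2 * y ^ 2 + 4 * z ^ 2 = (n : ℤ)) ↔
      ∃ d u : ℕ, Odd d ∧ u % 8 = 7 ∧ n = 2 ^ d * u :=
  stmt_7_general n
end

section
/- The quadratic form x² + 2y² + 2z² over ℤ represents every positive integer except those of the form 2^e·u with e even and u ≡ 7 (mod 8). In particular its smallest non-represented positive integer (truant) is 7. -/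
/-!
By the identity `x² + 2y² + 2z² = x² + (y + z)² + (y - z)²`, and since two of any three integers
have the same parity, the form represents exactly the sums of three squares, so the theorem is
Legendre's three-square theorem. Numbers `4ᵏ(8u + 7)` are not sums of three squares: squares are
`0, 1, 4 (mod 8)`, and a sum of three squares divisible by `4` has all three terms even.

Conversely let `n ≢ 0, 4, 7 (mod 8)`. Dirichlet's theorem on primes in arithmetic progressions
provides a prime `q ≡ c (mod 4n)`, for a suitable `c`, such that `m = nD - 1` is `q` or `2q` and
`-n` (hence `-D`) is a square modulo `m`, say `β² + D = hm`: the Jacobi symbol `(-n / ·)` has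
period `4n`, so `(-n / q) = (-n / c)`, which is computed without reciprocity.
The integral ternary form with Gram matrix `[[n, 1, 0], [1, h, β], [0, β, m]]` is
then positive definite of determinant `n(hm - β²) - m = 1`, and its value at `(1, 0, 0)` is `n`.
Every such form takes only sums of three squares as values: by Hermite's argument (reduce the
binary form left after completing the square on the first variable) it either has a smaller
value on a vector extending to a basis, or its first coefficient is `1` and it splits as a square
plus a positive binary form of determinant `1`, whose values are sums of two squares for the same
reason.
-/

open Matrix

namespace Matrix

variable {ι R : Type*} [Fintype ι] [DecidableEq ι] [CommRing R]

omit [DecidableEq ι] in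
theorem dotProduct_transpose_mul_mul_mulVec (G M : Matrix ι ι R) (v : ι → R) :
    v ⬝ᵥ (Mᵀ * G * M) *ᵥ v = (M *ᵥ v) ⬝ᵥ G *ᵥ (M *ᵥ v) := by
  simp [← mulVec_mulVec, dotProduct_mulVec, vecMul_transpose]

theorem exists_dotProduct_transpose_mul_mul_mulVec_eq {M : Matrix ι ι R} (hM : IsUnit M.det)
    (G : Matrix ι ι R) (w : ι → R) : ∃ v, v ⬝ᵥ (Mᵀ * G * M) *ᵥ v = w ⬝ᵥ G *ᵥ w := by
  obtain ⟨v, rfl⟩ := mulVec_surjective_iff_isUnit.mpr ((isUnit_iff_isUnit_det M).mpr hM) w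
  exact ⟨v, dotProduct_transpose_mul_mul_mulVec G M v⟩

theorem transpose_mul_mul_apply_self (G M : Matrix ι ι R) (j : ι) :
    (Mᵀ * G * M) j j = (M *ᵥ Pi.single j 1) ⬝ᵥ G *ᵥ (M *ᵥ Pi.single j 1) := by
  rw [← dotProduct_transpose_mul_mul_mulVec]; simp

theorem det_transpose_mul_mul (G : Matrix ι ι R) {M : Matrix ι ι R} (hM : M.det = 1) :
    (Mᵀ * G * M).det = G.det := by
  simp [det_mul, hM]

theorem PosDef.transpose_mul_mul {G : Matrix ι ι ℤ} (hG : G.PosDef) {M : Matrix ι ι ℤ}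
    (hM : IsUnit M.det) : (Mᵀ * G * M).PosDef := by
  simpa [conjTranspose_eq_transpose_of_trivial] using
    hG.conjTranspose_mul_mul_same (mulVec_injective_of_isUnit ((isUnit_iff_isUnit_det M).mpr hM))

end Matrix

theorem exists_abs_two_mul_add_mul_le (a w : ℤ) (ha : 0 < a) :
    ∃ t : ℤ, 2 * |w + a * t| ≤ a := by
  refine ⟨-((2 * w + a) / (2 * a)), ?_⟩
  rw [← abs_two, ← abs_mul, abs_two, abs_le]
  constructor <;>
  · have := Int.emod_add_mul_ediv (2 * w + a) (2 * a)
    have := Int.emod_nonneg (2 * w + a) (by omega : 2 * a ≠ 0)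
    have := Int.emod_lt_of_pos (2 * w + a) (by omega : 0 < 2 * a)
    linarith

namespace BinaryForm

theorem dotProduct_mulVec_eq {G : Matrix (Fin 2) (Fin 2) ℤ} (hG : G.IsHermitian) (v : Fin 2 → ℤ) :
    v ⬝ᵥ G *ᵥ v = G 0 0 * v 0 ^ 2 + 2 * G 0 1 * v 0 * v 1 + G 1 1 * v 1 ^ 2 := by
  simp [dotProduct, mulVec, Fin.sum_univ_two, (isHermitian_iff_isSymm.mp hG).apply 1 0]; ring

theorem det_eq {G : Matrix (Fin 2) (Fin 2) ℤ} (hG : G.IsHermitian) :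
    G.det = G 0 0 * G 1 1 - G 0 1 ^ 2 := by
  rw [det_fin_two, (isHermitian_iff_isSymm.mp hG).apply 1 0]; ring

theorem posDef_of_pos {G : Matrix (Fin 2) (Fin 2) ℤ} (hG : G.IsHermitian) (h0 : 0 < G 0 0)
    (hdet : 0 < G.det) : G.PosDef := by
  refine PosDef.of_dotProduct_mulVec_pos hG fun v hv => ?_
  have key : G 0 0 * (v ⬝ᵥ G *ᵥ v) = (G 0 0 * v 0 + G 0 1 * v 1) ^ 2 + G.det * v 1 ^ 2 := by
    rw [dotProduct_mulVec_eq hG, det_eq hG]; ring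
  rw [star_trivial]
  by_cases h1 : v 1 = 0
  · have h0' : v 0 ≠ 0 := fun h => hv (by ext i; fin_cases i <;> simp [h, h1])
    have : 0 < (G 0 0 * v 0) ^ 2 := by positivity
    rw [h1] at key
    nlinarith
  · have : 0 < G.det * v 1 ^ 2 := by positivity
    nlinarith [sq_nonneg (G 0 0 * v 0 + G 0 1 * v 1)]

def IsReduced (G : Matrix (Fin 2) (Fin 2) ℤ) : Prop :=
  2 * |G 0 1| ≤ G 0 0 ∧ G 0 0 ≤ G 1 1

theorem exists_isReduced (G : Matrix (Fin 2) (Fin 2) ℤ) (hG : G.PosDef) :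
    ∃ M : Matrix (Fin 2) (Fin 2) ℤ, M.det = 1 ∧ IsReduced (Mᵀ * G * M) := by
  induction hk : (G 0 0).toNat using Nat.strong_induction_on generalizing G with
  | _ k ih =>
  have hsymm := (isHermitian_iff_isSymm.mp hG.isHermitian).apply 1 0
  obtain ⟨t, ht⟩ := exists_abs_two_mul_add_mul_le (G 0 0) (G 0 1) hG.diag_pos
  set S : Matrix (Fin 2) (Fin 2) ℤ := !![1, t; 0, 1]
  have hS : S.det = 1 := by simp [S, det_fin_two]
  set c := G 1 1 + 2 * G 0 1 * t + G 0 0 * t ^ 2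
  have hSGS : Sᵀ * G * S = !![G 0 0, G 0 1 + G 0 0 * t; G 0 1 + G 0 0 * t, c] := by
    ext i j
    fin_cases i <;> fin_cases j <;> simp [S, c, mul_apply, Fin.sum_univ_two, hsymm] <;> ring
  by_cases hle : G 0 0 ≤ c
  · exact ⟨S, hS, by simpa [IsReduced, hSGS] using ⟨ht, hle⟩⟩
  set W : Matrix (Fin 2) (Fin 2) ℤ := !![0, -1; 1, 0]
  have hW : W.det = 1 := by simp [W, det_fin_two]
  have hswap : (Wᵀ * (Sᵀ * G * S) * W) 0 0 = c := by
    simp [hSGS, W, mul_apply, Fin.sum_univ_two]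
  have hpos : (Wᵀ * (Sᵀ * G * S) * W).PosDef :=
    (hG.transpose_mul_mul (hS ▸ isUnit_one)).transpose_mul_mul (hW ▸ isUnit_one)
  obtain ⟨N, hN, hred⟩ := ih _ (by have := hpos.diag_pos (i := 0); omega) _ hpos rfl
  refine ⟨S * W * N, by simp [det_mul, hS, hW, hN], ?_⟩
  simpa [transpose_mul, Matrix.mul_assoc] using hred

theorem IsReduced.three_mul_sq_le {G : Matrix (Fin 2) (Fin 2) ℤ} (hG : G.IsHermitian)
    (h : IsReduced G) : 3 * G 0 0 ^ 2 ≤ 4 * G.det := by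
  rw [det_eq hG]
  nlinarith [sq_abs (G 0 1), abs_nonneg (G 0 1), h.1, h.2]

theorem exists_isCoprime_three_mul_sq_le (G : Matrix (Fin 2) (Fin 2) ℤ) (hG : G.PosDef) :
    ∃ y z : ℤ, IsCoprime y z ∧ 3 * (![y, z] ⬝ᵥ G *ᵥ ![y, z]) ^ 2 ≤ 4 * G.det := by
  obtain ⟨M, hM, hred⟩ := exists_isReduced G hG
  have hR := (hG.transpose_mul_mul (hM ▸ isUnit_one)).isHermitian
  refine ⟨M 0 0, M 1 0, ⟨M 1 1, -M 0 1, by rw [det_fin_two] at hM; linear_combination hM⟩, ?_⟩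
  have hcol : M *ᵥ Pi.single 0 1 = ![M 0 0, M 1 0] := by
    ext i; fin_cases i <;> simp
  have := hred.three_mul_sq_le hR
  rwa [det_transpose_mul_mul G hM, transpose_mul_mul_apply_self, hcol] at this

theorem exists_sq_add_sq (G : Matrix (Fin 2) (Fin 2) ℤ) (hG : G.PosDef) (hdet : G.det = 1)
    (w : Fin 2 → ℤ) : ∃ p q : ℤ, w ⬝ᵥ G *ᵥ w = p ^ 2 + q ^ 2 := by
  obtain ⟨M, hM, hred⟩ := exists_isReduced G hG
  have hR := hG.transpose_mul_mul (M := M) (hM ▸ isUnit_one)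
  have hdetR : (Mᵀ * G * M).det = 1 := by rw [det_transpose_mul_mul G hM, hdet]
  have h3 := hred.three_mul_sq_le hR.isHermitian
  have h0 : 0 < (Mᵀ * G * M) 0 0 := hR.diag_pos
  have h00 : (Mᵀ * G * M) 0 0 = 1 := by nlinarith
  have h01 : (Mᵀ * G * M) 0 1 = 0 := by
    have := hred.1
    rw [h00] at this
    exact abs_eq_zero.mp (le_antisymm (by omega) (abs_nonneg _))
  have h11 : (Mᵀ * G * M) 1 1 = 1 := by rw [det_eq hR.isHermitian, h00, h01] at hdetR; linarith
  obtain ⟨v, hv⟩ := exists_dotProduct_transpose_mul_mul_mulVec_eq (hM ▸ isUnit_one) G w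
  exact ⟨v 0, v 1, by rw [← hv, dotProduct_mulVec_eq hR.isHermitian, h00, h01, h11]; ring⟩

end BinaryForm

namespace TernaryForm

/-- `G 0 0` times the Schur complement of the entry `G 0 0` in `G`; the factor keeps it integral. -/
def scaledSchurComplement (G : Matrix (Fin 3) (Fin 3) ℤ) : Matrix (Fin 2) (Fin 2) ℤ :=
  !![G 0 0 * G 1 1 - G 0 1 ^ 2, G 0 0 * G 1 2 - G 0 1 * G 0 2;
     G 0 0 * G 1 2 - G 0 1 * G 0 2, G 0 0 * G 2 2 - G 0 2 ^ 2]

variable {G : Matrix (Fin 3) (Fin 3) ℤ}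

theorem isHermitian_scaledSchurComplement : (scaledSchurComplement G).IsHermitian := by
  ext i j; fin_cases i <;> fin_cases j <;> rfl

theorem mul_dotProduct_mulVec_eq (hG : G.IsHermitian) (v : Fin 3 → ℤ) :
    G 0 0 * (v ⬝ᵥ G *ᵥ v) = (G 0 0 * v 0 + G 0 1 * v 1 + G 0 2 * v 2) ^ 2 +
      ![v 1, v 2] ⬝ᵥ scaledSchurComplement G *ᵥ ![v 1, v 2] := by
  have hs := isHermitian_iff_isSymm.mp hG
  rw [BinaryForm.dotProduct_mulVec_eq isHermitian_scaledSchurComplement]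
  simp [scaledSchurComplement, dotProduct, mulVec, Fin.sum_univ_three, hs.apply 1 0,
    hs.apply 2 0, hs.apply 2 1]
  ring

theorem det_scaledSchurComplement (hG : G.IsHermitian) :
    (scaledSchurComplement G).det = G 0 0 * G.det := by
  have hs := isHermitian_iff_isSymm.mp hG
  simp [scaledSchurComplement, det_fin_two, det_fin_three, hs.apply 1 0, hs.apply 2 0,
    hs.apply 2 1]
  ring

theorem posDef_scaledSchurComplement (hG : G.PosDef) : (scaledSchurComplement G).PosDef := by
  refine PosDef.of_dotProduct_mulVec_pos isHermitian_scaledSchurComplement fun w hw => ?_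
  have ha : 0 < G 0 0 := hG.diag_pos
  set v : Fin 3 → ℤ := ![-(G 0 1 * w 0 + G 0 2 * w 1), G 0 0 * w 0, G 0 0 * w 1]
  have hv : v ≠ 0 := fun h => hw (by
    ext i; fin_cases i
    · simpa [v, ha.ne'] using congrFun h 1
    · simpa [v, ha.ne'] using congrFun h 2)
  have key : G 0 0 * (v ⬝ᵥ G *ᵥ v) = G 0 0 ^ 2 * (w ⬝ᵥ scaledSchurComplement G *ᵥ w) := by
    rw [mul_dotProduct_mulVec_eq hG.isHermitian,
      BinaryForm.dotProduct_mulVec_eq isHermitian_scaledSchurComplement,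
      BinaryForm.dotProduct_mulVec_eq isHermitian_scaledSchurComplement]
    simp [v]; ring
  have hpos : 0 < v ⬝ᵥ G *ᵥ v := by simpa using hG.dotProduct_mulVec_pos hv
  rw [star_trivial]
  exact pos_of_mul_pos_right (key ▸ mul_pos ha hpos) (by positivity)

theorem posDef_of_scaledSchurComplement (hG : G.IsHermitian) (h0 : 0 < G 0 0)
    (hS : (scaledSchurComplement G).PosDef) : G.PosDef := by
  refine PosDef.of_dotProduct_mulVec_pos hG fun v hv => ?_
  have key := mul_dotProduct_mulVec_eq hG v
  rw [star_trivial]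
  by_cases htail : ![v 1, v 2] = 0
  · have h1 : v 1 = 0 := by simpa using congrFun htail 0
    have h2 : v 2 = 0 := by simpa using congrFun htail 1
    have h0' : v 0 ≠ 0 := fun h => hv (by ext i; fin_cases i <;> simp [h, h1, h2])
    have : 0 < (G 0 0 * v 0) ^ 2 := by positivity
    rw [htail, h1, h2] at key
    simp only [zero_dotProduct, mul_zero, add_zero] at key
    nlinarith
  · have := hS.dotProduct_mulVec_pos htail
    rw [star_trivial] at this
    nlinarith [sq_nonneg (G 0 0 * v 0 + G 0 1 * v 1 + G 0 2 * v 2)]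

theorem eq_one_or_exists_lt (hG : G.PosDef) (hdet : G.det = 1) :
    G 0 0 = 1 ∨ ∃ v : Fin 3 → ℤ, IsCoprime (v 1) (v 2) ∧ v ⬝ᵥ G *ᵥ v < G 0 0 := by
  have ha : 0 < G 0 0 := hG.diag_pos
  obtain ⟨y, z, hyz, hB⟩ :=
    BinaryForm.exists_isCoprime_three_mul_sq_le _ (posDef_scaledSchurComplement hG)
  rw [det_scaledSchurComplement hG.isHermitian, hdet, mul_one] at hB
  obtain ⟨x, hx⟩ := exists_abs_two_mul_add_mul_le (G 0 0) (G 0 1 * y + G 0 2 * z) ha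
  by_cases hlt : ![x, y, z] ⬝ᵥ G *ᵥ ![x, y, z] < G 0 0
  · exact Or.inr ⟨![x, y, z], hyz, hlt⟩
  left
  have key := mul_dotProduct_mulVec_eq hG.isHermitian ![x, y, z]
  simp only [cons_val_zero, cons_val_one, cons_val_two, tail_cons, head_cons] at key
  set B := ![y, z] ⬝ᵥ scaledSchurComplement G *ᵥ ![y, z]
  set s := G 0 0 * x + G 0 1 * y + G 0 2 * z
  -- with `a = G 0 0`: `a² ≤ a Q(x, y, z) = s² + B` and `4 s² ≤ a²` give `3 a² ≤ 4 B`, which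
  -- together with `3 B² ≤ 4 a` forces `a = 1`
  have hs : 4 * s ^ 2 ≤ G 0 0 ^ 2 := by
    have : 2 * |s| ≤ G 0 0 := by rwa [show s = G 0 1 * y + G 0 2 * z + G 0 0 * x by ring]
    nlinarith [sq_abs s, abs_nonneg s]
  have h3a : 3 * G 0 0 ^ 2 ≤ 4 * B := by nlinarith
  have h9 : 9 * G 0 0 ^ 4 ≤ 16 * B ^ 2 := by nlinarith
  have : G 0 0 ^ 3 < 8 := by nlinarith
  nlinarith

theorem exists_det_eq_one_mulVec_single_eq (v : Fin 3 → ℤ) (hv : IsCoprime (v 1) (v 2)) :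
    ∃ M : Matrix (Fin 3) (Fin 3) ℤ, M.det = 1 ∧ M *ᵥ Pi.single 0 1 = v := by
  obtain ⟨u, w, huw⟩ := hv
  refine ⟨!![v 0, 0, 1; v 1, -w, 0; v 2, u, 0], ?_, ?_⟩
  · simp [det_fin_three]; linear_combination huw
  · ext i; fin_cases i <;> simp

theorem exists_sum_three_sq (G : Matrix (Fin 3) (Fin 3) ℤ) (hG : G.PosDef) (hdet : G.det = 1)
    (w : Fin 3 → ℤ) : ∃ x y z : ℤ, w ⬝ᵥ G *ᵥ w = x ^ 2 + y ^ 2 + z ^ 2 := by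
  induction hk : (G 0 0).toNat using Nat.strong_induction_on generalizing G w with
  | _ k ih =>
  rcases eq_one_or_exists_lt hG hdet with ha | ⟨v, hv, hlt⟩
  · have hS : (scaledSchurComplement G).det = 1 := by
      rw [det_scaledSchurComplement hG.isHermitian, ha, hdet, mul_one]
    obtain ⟨p, q, hpq⟩ := BinaryForm.exists_sq_add_sq _ (posDef_scaledSchurComplement hG) hS
      ![w 1, w 2]
    have key := mul_dotProduct_mulVec_eq hG.isHermitian w
    rw [ha, one_mul, hpq, ← add_assoc] at key
    exact ⟨_, p, q, key⟩
  · obtain ⟨M, hM, hMv⟩ := exists_det_eq_one_mulVec_single_eq v hv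
    obtain ⟨u, hu⟩ := exists_dotProduct_transpose_mul_mul_mulVec_eq (hM ▸ isUnit_one) G w
    have h00 : (Mᵀ * G * M) 0 0 = v ⬝ᵥ G *ᵥ v := by rw [transpose_mul_mul_apply_self, hMv]
    have hpos : 0 < (Mᵀ * G * M) 0 0 := (hG.transpose_mul_mul (hM ▸ isUnit_one)).diag_pos
    rw [← hu]
    exact ih _ (by omega) _ (hG.transpose_mul_mul (hM ▸ isUnit_one))
      (by rw [det_transpose_mul_mul G hM, hdet]) u rfl

end TernaryForm

theorem exists_sum_three_sq_of_dvd {n m D β : ℤ} (hn : 0 < n) (hm : 0 < m) (hmD : m + 1 = n * D)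
    (hdvd : m ∣ β ^ 2 + D) : ∃ x y z : ℤ, x ^ 2 + y ^ 2 + z ^ 2 = n := by
  obtain ⟨h, hh⟩ := hdvd
  set G : Matrix (Fin 3) (Fin 3) ℤ := !![n, 1, 0; 1, h, β; 0, β, m]
  have hGh : G.IsHermitian := by ext i j; fin_cases i <;> fin_cases j <;> rfl
  have hdet : G.det = 1 := by
    simp [G, det_fin_three]; linear_combination (-n) * hh - hmD
  have hnh : 1 < n * h := by nlinarith [sq_nonneg β]
  have hS : (TernaryForm.scaledSchurComplement G).PosDef :=
    BinaryForm.posDef_of_pos TernaryForm.isHermitian_scaledSchurComplement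
      (by simp [TernaryForm.scaledSchurComplement, G]; linarith)
      (by rw [TernaryForm.det_scaledSchurComplement hGh, hdet]; simpa [G])
  have hG := TernaryForm.posDef_of_scaledSchurComplement hGh (by simpa [G]) hS
  obtain ⟨x, y, z, hxyz⟩ := TernaryForm.exists_sum_three_sq G hG hdet (Pi.single 0 1)
  exact ⟨x, y, z, by simpa [G] using hxyz.symm⟩

theorem exists_dvd_sq_add_of_isSquare {m n D : ℕ} (hmD : m + 1 = n * D)
    (hsq : IsSquare (-(n : ZMod m))) : ∃ β : ℤ, (m : ℤ) ∣ β ^ 2 + D := by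
  obtain ⟨r, hr⟩ := hsq
  obtain ⟨β, hβ⟩ := ZMod.intCast_surjective (r * (D : ZMod m))
  have hnD : (n : ZMod m) * D = 1 := by
    have := congrArg (Nat.cast : ℕ → ZMod m) hmD
    push_cast at this
    rwa [ZMod.natCast_self, zero_add, eq_comm] at this
  refine ⟨β, (ZMod.intCast_zmod_eq_zero_iff_dvd _ _).mp ?_⟩
  push_cast
  rw [hβ]
  linear_combination (-(D : ZMod m) ^ 2) * hr - D * hnD

theorem exists_sum_three_sq_of_isSquare {m n D : ℕ} (hn : 0 < n) (hm : 0 < m)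
    (hmD : m + 1 = n * D) (hsq : IsSquare (-(n : ZMod m))) :
    ∃ x y z : ℤ, x ^ 2 + y ^ 2 + z ^ 2 = n := by
  obtain ⟨β, hβ⟩ := exists_dvd_sq_add_of_isSquare hmD hsq
  exact exists_sum_three_sq_of_dvd (by exact_mod_cast hn) (by exact_mod_cast hm)
    (by exact_mod_cast hmD) hβ

theorem isSquare_intCast_zmod_two_mul {q : ℕ} (hq : Odd q) {a : ℤ} (h : IsSquare (a : ZMod q)) :
    IsSquare (a : ZMod (2 * q)) := by
  let e := ZMod.chineseRemainder (Nat.coprime_two_left.mpr hq)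
  obtain ⟨r, hr⟩ : IsSquare (a : ZMod 2) := by
    generalize (a : ZMod 2) = b; revert b; decide
  obtain ⟨s, hs⟩ := h
  have : IsSquare (e (a : ZMod (2 * q))) := ⟨(r, s), by ext <;> simp [hr, hs]⟩
  simpa using this.map e.symm

theorem exists_prime_eq_add_mul_jacobiSym_eq {n : ℕ} (hn : 0 < n) (c : ℕ) (hc : c.Coprime (4 * n)) :
    ∃ q k : ℕ, q.Prime ∧ q = c + 4 * n * k ∧ jacobiSym (-n) q = jacobiSym (-n) c := by
  have : NeZero (4 * n) := ⟨by omega⟩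
  obtain ⟨q, hqc, hq, hmod⟩ :=
    Nat.forall_exists_prime_gt_and_eq_mod ((ZMod.isUnit_iff_coprime c (4 * n)).mpr hc) c
  have hmod' := (ZMod.natCast_eq_natCast_iff' q c (4 * n)).mp hmod
  obtain ⟨k, hk⟩ := (Nat.modEq_iff_dvd' hqc.le).mp hmod'.symm
  have hcodd : Odd c := Nat.coprime_two_right.mp (hc.coprime_dvd_right ⟨2 * n, by ring⟩)
  have hqk : q = c + 4 * n * k := by omega
  have hqodd : Odd q := hqk ▸ hcodd.add_even ⟨2 * n * k, by ring⟩
  refine ⟨q, k, hq, hqk, ?_⟩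
  rw [jacobiSym.mod_right _ hqodd, jacobiSym.mod_right _ hcodd, Int.natAbs_neg,
    Int.natAbs_natCast, hmod']

theorem exists_isSquare_neg_of_emod_four {n : ℕ} (hn : n % 4 = 1 ∨ n % 4 = 2) :
    ∃ m D : ℕ, 0 < m ∧ m + 1 = n * D ∧ IsSquare (-(n : ZMod m)) := by
  obtain ⟨c, hcn⟩ : ∃ c, c + 1 = 2 * n := ⟨2 * n - 1, by omega⟩
  have hcn' : (c : ℤ) + 1 = 2 * n := by exact_mod_cast hcn
  have hc : c.Coprime (4 * n) := Nat.isCoprime_iff_coprime.mp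
    ⟨-(c + 2), n, by push_cast; linear_combination (-(2 * n + c + 1 : ℤ)) * hcn'⟩
  obtain ⟨q, k, hq, hqk, hJ⟩ := exists_prime_eq_add_mul_jacobiSym_eq (by omega) c hc
  have hcodd : Odd c := Nat.odd_iff.mpr (by omega)
  -- `(-2) * (-n) = c + 1`, and `-2` is a square modulo `c ≡ 1, 3 (mod 8)`
  have hJc : jacobiSym (-n) c = 1 := by
    have h2 : jacobiSym (-2) c = 1 := by
      rw [jacobiSym.at_neg_two hcodd, ZMod.χ₈'_nat_eq_if_mod_eight, if_neg (by omega),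
        if_pos (by omega)]
    have := jacobiSym.mul_left (-2) (-n) c
    rwa [h2, one_mul, jacobiSym.mod_left' (a₂ := 1), jacobiSym.one_left, eq_comm] at this
    rw [show (-2 : ℤ) * -n = 1 + c * 1 by linear_combination -hcn', Int.add_mul_emod_self_left]
  have := Fact.mk hq
  refine ⟨q, 2 + 4 * k, hq.pos, by rw [hqk]; linear_combination hcn, ?_⟩
  simpa using ZMod.isSquare_of_jacobiSym_eq_one (hJ.trans hJc)

theorem exists_isSquare_neg_of_emod_eight_eq_three {n : ℕ} (hn : n % 8 = 3) :
    ∃ m D : ℕ, 0 < m ∧ m + 1 = n * D ∧ IsSquare (-(n : ZMod m)) := by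
  obtain ⟨c, i, hci, hnc⟩ : ∃ c i, c = 4 * i + 1 ∧ n = 2 * c + 1 :=
    ⟨4 * (n / 8) + 1, n / 8, rfl, by omega⟩
  have hc : c.Coprime (4 * n) := Nat.isCoprime_iff_coprime.mp
    ⟨1 + 8 * i, -i, by rw [hnc, hci]; push_cast; ring⟩
  obtain ⟨q, k, hq, hqk, hJ⟩ := exists_prime_eq_add_mul_jacobiSym_eq (by omega) c hc
  have hcodd : Odd c := Nat.odd_iff.mpr (by omega)
  -- `-n ≡ -1 (mod c)` and `c ≡ 1 (mod 4)`
  have hJc : jacobiSym (-n) c = 1 := by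
    rw [jacobiSym.mod_left' (a₂ := -1), jacobiSym.at_neg_one hcodd,
      ZMod.χ₄_nat_one_mod_four (by omega)]
    rw [show -(n : ℤ) = -1 + c * (-2) by rw [hnc]; push_cast; ring, Int.add_mul_emod_self_left]
  have hqodd : Odd q := hqk ▸ hcodd.add_even ⟨2 * n * k, by ring⟩
  have := Fact.mk hq
  refine ⟨2 * q, 1 + 8 * k, by simp [hq.pos], by rw [hqk, hnc]; ring, ?_⟩
  simpa using isSquare_intCast_zmod_two_mul hqodd
    (ZMod.isSquare_of_jacobiSym_eq_one (hJ.trans hJc))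

theorem Int.sq_emod_four (x : ℤ) : x ^ 2 % 4 = x % 2 := by
  rcases Int.even_or_odd' x with ⟨k, rfl | rfl⟩ <;> ring_nf <;> omega

theorem exists_sum_three_sq_of_four_mul {x y z m : ℤ} (h : x ^ 2 + y ^ 2 + z ^ 2 = 4 * m) :
    ∃ a b c : ℤ, a ^ 2 + b ^ 2 + c ^ 2 = m := by
  have := Int.sq_emod_four x
  have := Int.sq_emod_four y
  have := Int.sq_emod_four z
  obtain ⟨a, rfl⟩ : 2 ∣ x := by omega
  obtain ⟨b, rfl⟩ : 2 ∣ y := by omega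
  obtain ⟨c, rfl⟩ : 2 ∣ z := by omega
  exact ⟨a, b, c, by linarith⟩

theorem sq_add_sq_add_sq_emod_eight_ne_seven (x y z : ℤ) : (x ^ 2 + y ^ 2 + z ^ 2) % 8 ≠ 7 := by
  intro h
  have h8 : ((x ^ 2 + y ^ 2 + z ^ 2 : ℤ) : ZMod 8) = 7 := by
    rw [← ZMod.intCast_mod, Nat.cast_ofNat, h]; rfl
  push_cast at h8
  revert h8
  generalize (x : ZMod 8) = a
  generalize (y : ZMod 8) = b
  generalize (z : ZMod 8) = c
  revert a b c
  decide

theorem not_exists_sum_three_sq_four_pow_mul (k : ℕ) {u : ℕ} (hu : u % 8 = 7) :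
    ¬ ∃ x y z : ℤ, x ^ 2 + y ^ 2 + z ^ 2 = (4 ^ k * u : ℕ) := by
  induction k with
  | zero =>
    rintro ⟨x, y, z, h⟩
    apply sq_add_sq_add_sq_emod_eight_ne_seven x y z
    rw [h]; push_cast; omega
  | succ k ih =>
    rintro ⟨x, y, z, h⟩
    exact ih (exists_sum_three_sq_of_four_mul (by rw [h]; push_cast; ring))

theorem exists_sum_three_sq_iff (n : ℕ) :
    (∃ x y z : ℤ, x ^ 2 + y ^ 2 + z ^ 2 = n) ↔ ¬ ∃ k u : ℕ, u % 8 = 7 ∧ n = 4 ^ k * u := by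
  constructor
  · rintro hrep ⟨k, u, hu, rfl⟩
    exact not_exists_sum_three_sq_four_pow_mul k hu hrep
  induction n using Nat.strong_induction_on with
  | _ n ih =>
  intro hn
  rcases Nat.eq_zero_or_pos n with rfl | hpos
  · exact ⟨0, 0, 0, by norm_num⟩
  by_cases h4 : n % 4 = 0
  · obtain ⟨m, rfl⟩ : 4 ∣ n := Nat.dvd_of_mod_eq_zero h4
    obtain ⟨x, y, z, h⟩ := ih m (by omega) fun ⟨k, u, hu, hm⟩ =>
      hn ⟨k + 1, u, hu, by rw [hm, pow_succ]; ring⟩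
    exact ⟨2 * x, 2 * y, 2 * z, by push_cast; linear_combination 4 * h⟩
  have h7 : n % 8 ≠ 7 := fun h7 => hn ⟨0, n, h7, by ring⟩
  obtain ⟨m, D, hm, hmD, hsq⟩ : ∃ m D : ℕ, 0 < m ∧ m + 1 = n * D ∧ IsSquare (-(n : ZMod m)) := by
    rcases (by omega : (n % 4 = 1 ∨ n % 4 = 2) ∨ n % 8 = 3) with h | h
    · exact exists_isSquare_neg_of_emod_four h
    · exact exists_isSquare_neg_of_emod_eight_eq_three h
  exact exists_sum_three_sq_of_isSquare hpos hm hmD hsq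

theorem exists_sq_add_two_mul_sq_add_two_mul_sq_of_two_dvd_sub {x y z n : ℤ}
    (h : x ^ 2 + y ^ 2 + z ^ 2 = n) (hyz : 2 ∣ y - z) :
    ∃ a b c : ℤ, a ^ 2 + 2 * b ^ 2 + 2 * c ^ 2 = n := by
  obtain ⟨k, hk⟩ := hyz
  exact ⟨x, z + k, k, by rw [← h, show y = z + 2 * k by omega]; ring⟩

theorem exists_sq_add_two_mul_sq_add_two_mul_sq_iff (n : ℤ) :
    (∃ x y z : ℤ, x ^ 2 + 2 * y ^ 2 + 2 * z ^ 2 = n) ↔ ∃ x y z : ℤ, x ^ 2 + y ^ 2 + z ^ 2 = n := by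
  constructor
  · rintro ⟨x, y, z, h⟩
    exact ⟨x, y + z, y - z, by rw [← h]; ring⟩
  · rintro ⟨x, y, z, h⟩
    -- two of `x, y, z` have the same parity
    by_cases hyz : 2 ∣ y - z
    · exact exists_sq_add_two_mul_sq_add_two_mul_sq_of_two_dvd_sub h hyz
    by_cases hxz : 2 ∣ x - z
    · exact exists_sq_add_two_mul_sq_add_two_mul_sq_of_two_dvd_sub
        (by rw [← h]; ring : y ^ 2 + x ^ 2 + z ^ 2 = n) hxz
    · exact exists_sq_add_two_mul_sq_add_two_mul_sq_of_two_dvd_sub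
        (by rw [← h]; ring : z ^ 2 + x ^ 2 + y ^ 2 = n) (by omega)

theorem stmt_10 :
    (∀ n : ℕ, 0 < n →
      ((¬ ∃ x y z : ℤ, x ^ 2 + 2 * y ^ 2 + 2 * z ^ 2 = (n : ℤ)) ↔
        ∃ e u : ℕ, Even e ∧ u % 8 = 7 ∧ n = 2 ^ e * u)) ∧
    IsLeast {n : ℕ | 0 < n ∧ ¬ ∃ x y z : ℤ, x ^ 2 + 2 * y ^ 2 + 2 * z ^ 2 = (n : ℤ)} 7 := by
  have key : ∀ n : ℕ, (¬ ∃ x y z : ℤ, x ^ 2 + 2 * y ^ 2 + 2 * z ^ 2 = (n : ℤ)) ↔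
      ∃ e u : ℕ, Even e ∧ u % 8 = 7 ∧ n = 2 ^ e * u := by
    intro n
    rw [exists_sq_add_two_mul_sq_add_two_mul_sq_iff, exists_sum_three_sq_iff, not_not]
    constructor
    · rintro ⟨k, u, hu, rfl⟩
      exact ⟨2 * k, u, even_two_mul k, hu, by rw [pow_mul]; norm_num⟩
    · rintro ⟨e, u, ⟨k, rfl⟩, hu, rfl⟩
      exact ⟨k, u, hu, by rw [← two_mul, pow_mul]; norm_num⟩
  refine ⟨fun n _ => key n, ⟨by norm_num, (key 7).mpr ⟨0, 7, Even.zero, rfl, rfl⟩⟩, ?_⟩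
  rintro n ⟨-, hrep⟩
  obtain ⟨e, u, -, hu, rfl⟩ := (key n).mp hrep
  have : 7 ≤ u := by omega
  exact this.trans (Nat.le_mul_of_pos_left u (Nat.two_pow_pos e))
end

section
/- The Hermitian lattice ⟨1,1⟩ over ℚ(√−3) is universal: the quadratic form x₁² + x₁x₂ + x₂² + y₁² + y₁y₂ + y₂² in four integer variables represents every positive integer. -/
/-!
The form `N(x₁, x₂, y₁, y₂) = eisNorm x₁ x₂ + eisNorm y₁ y₂` is the reduced norm of the quaternion
order spanned by `1, ω, j, ωj` with `j² = -1`. Hence the integers it represents are closed under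
multiplication, and it suffices to represent primes, which is done by Lagrange's descent.
For an odd prime `p`, writing `-3 ≡ a² + b² (mod p)` gives `N(a + 1, -2, b, 0) = a² + b² + 3 = m p`
with `0 < m < p`. If `N(x) = m p` with `1 < m < p`, reduce `x` modulo `m` to `x'` with
`N(x') ≤ 7m²/8 < m²`; then `N(x') = m k` with `0 < k < m`, and `m` divides every coordinate
of `x x̄'`, whose norm is `m² k p`.
-/

def eisNorm (x y : ℤ) : ℤ := x ^ 2 + x * y + y ^ 2

lemma four_mul_eisNorm (x y : ℤ) : 4 * eisNorm x y = (2 * x + y) ^ 2 + 3 * y ^ 2 := by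
  unfold eisNorm; ring

lemma eisNorm_nonneg (x y : ℤ) : 0 ≤ eisNorm x y := by
  nlinarith [four_mul_eisNorm x y, sq_nonneg (2 * x + y), sq_nonneg y]

lemma eisNorm_eq_zero_iff {x y : ℤ} : eisNorm x y = 0 ↔ x = 0 ∧ y = 0 := by
  refine ⟨fun h => ?_, fun ⟨hx, hy⟩ => by simp [eisNorm, hx, hy]⟩
  have hy : y = 0 := by nlinarith [four_mul_eisNorm x y, sq_nonneg (2 * x + y), sq_nonneg y]
  subst hy
  simpa [eisNorm] using h

@[gcongr]
lemma Int.ModEq.eisNorm {m x y x' y' : ℤ} (hx : x' ≡ x [ZMOD m]) (hy : y' ≡ y [ZMOD m]) :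
    eisNorm x' y' ≡ eisNorm x y [ZMOD m] := by
  unfold _root_.eisNorm; gcongr

-- Balanced residues: first `|2y'| ≤ m`, then `|2x' + y'| ≤ m`; conclude by `four_mul_eisNorm`.
lemma exists_modEq_eisNorm_le {m : ℕ} (hm : 0 < m) (x y : ℤ) :
    ∃ x' y', x' ≡ x [ZMOD m] ∧ y' ≡ y [ZMOD m] ∧ 16 * eisNorm x' y' ≤ 7 * m ^ 2 := by
  set y' := y.bmod m
  set r := (x + y' / 2).bmod m
  have hy₁ := Int.le_bmod (x := y) hm
  have hy₂ := Int.bmod_lt (x := y) hm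
  have hr₁ := Int.le_bmod (x := x + y' / 2) hm
  have hr₂ := Int.bmod_lt (x := x + y' / 2) hm
  refine ⟨r - y' / 2, y', ?_, Int.bmod_emod, ?_⟩
  · calc r - y' / 2 ≡ x + y' / 2 - y' / 2 [ZMOD m] := by gcongr; exact Int.bmod_emod
      _ = x := by ring
  · have h₁ : (2 * (r - y' / 2) + y') ^ 2 ≤ (m : ℤ) ^ 2 := sq_le_sq' (by omega) (by omega)
    have h₂ : (2 * y') ^ 2 ≤ (m : ℤ) ^ 2 := sq_le_sq' (by omega) (by omega)
    linarith [four_mul_eisNorm (r - y' / 2) y']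

def IsSumTwoEisNorms (n : ℤ) : Prop := ∃ a b c d : ℤ, eisNorm a b + eisNorm c d = n

-- The two arguments on the right are the coordinates of the quaternion product `x ȳ`.
lemma eisNorm_add_eisNorm_mul (a b c d a' b' c' d' : ℤ) :
    (eisNorm a b + eisNorm c d) * (eisNorm a' b' + eisNorm c' d') =
      eisNorm (a * a' + a * b' + b * b' + c * c' + c * d' + d * d')
          (b * a' - a * b' + d * c' - c * d') +
        eisNorm (c * a' - d * b' - a * c' + b * d')
          (c * b' + d * a' + d * b' - a * d' - b * c' - b * d') := by
  unfold eisNorm; ring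

lemma IsSumTwoEisNorms.mul {m n : ℤ} (hm : IsSumTwoEisNorms m) (hn : IsSumTwoEisNorms n) :
    IsSumTwoEisNorms (m * n) := by
  obtain ⟨a, b, c, d, rfl⟩ := hm
  obtain ⟨a', b', c', d', rfl⟩ := hn
  exact ⟨_, _, _, _, (eisNorm_add_eisNorm_mul a b c d a' b' c' d').symm⟩

-- `x ȳ ≡ x x̄ = N(x) ≡ 0` coordinatewise modulo `m`, so `N(x) N(y) = m² N(x ȳ / m)`.
lemma isSumTwoEisNorms_mul_of_modEq {m A B a b c d a' b' c' d' : ℤ} (hm : m ≠ 0)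
    (ha : a' ≡ a [ZMOD m]) (hb : b' ≡ b [ZMOD m]) (hc : c' ≡ c [ZMOD m]) (hd : d' ≡ d [ZMOD m])
    (hA : eisNorm a b + eisNorm c d = m * A) (hB : eisNorm a' b' + eisNorm c' d' = m * B) :
    IsSumTwoEisNorms (A * B) := by
  obtain ⟨e, he⟩ : m ∣ a * a' + a * b' + b * b' + c * c' + c * d' + d * d' := by
    rw [← Int.modEq_zero_iff_dvd]
    calc _ ≡ a * a + a * b + b * b + c * c + c * d + d * d [ZMOD m] := by gcongr
      _ = m * A := by rw [← hA]; unfold eisNorm; ring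
      _ ≡ 0 [ZMOD m] := Int.modEq_zero_iff_dvd.mpr (dvd_mul_right m A)
  obtain ⟨f, hf⟩ : m ∣ b * a' - a * b' + d * c' - c * d' := by
    rw [← Int.modEq_zero_iff_dvd]
    calc _ ≡ b * a - a * b + d * c - c * d [ZMOD m] := by gcongr
      _ = 0 := by ring
  obtain ⟨g, hg⟩ : m ∣ c * a' - d * b' - a * c' + b * d' := by
    rw [← Int.modEq_zero_iff_dvd]
    calc _ ≡ c * a - d * b - a * c + b * d [ZMOD m] := by gcongr
      _ = 0 := by ring
  obtain ⟨h, hh⟩ : m ∣ c * b' + d * a' + d * b' - a * d' - b * c' - b * d' := by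
    rw [← Int.modEq_zero_iff_dvd]
    calc _ ≡ c * b + d * a + d * b - a * d - b * c - b * d [ZMOD m] := by gcongr
      _ = 0 := by ring
  refine ⟨e, f, g, h, mul_left_cancel₀ (pow_ne_zero 2 hm) ?_⟩
  calc m ^ 2 * (eisNorm e f + eisNorm g h) = eisNorm (m * e) (m * f) + eisNorm (m * g) (m * h) := by
        unfold eisNorm; ring
    _ = (eisNorm a b + eisNorm c d) * (eisNorm a' b' + eisNorm c' d') := by
        rw [← he, ← hf, ← hg, ← hh, eisNorm_add_eisNorm_mul]
    _ = m ^ 2 * (A * B) := by rw [hA, hB]; ring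

lemma exists_lt_isSumTwoEisNorms_mul {p m : ℕ} (hp : p.Prime) (hm : 1 < m) (hmp : m < p)
    (h : IsSumTwoEisNorms (m * p)) : ∃ k < m, 0 < k ∧ IsSumTwoEisNorms (k * p) := by
  have hm₀ : (m : ℤ) ≠ 0 := by omega
  obtain ⟨a, b, c, d, hx⟩ := h
  obtain ⟨a', b', ha, hb, hab⟩ := exists_modEq_eisNorm_le (by omega : 0 < m) a b
  obtain ⟨c', d', hc, hd, hcd⟩ := exists_modEq_eisNorm_le (by omega : 0 < m) c d
  obtain ⟨k, hk⟩ : (m : ℤ) ∣ eisNorm a' b' + eisNorm c' d' := by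
    rw [← Int.modEq_zero_iff_dvd]
    calc _ ≡ eisNorm a b + eisNorm c d [ZMOD m] := by gcongr
      _ = m * p := hx
      _ ≡ 0 [ZMOD m] := Int.modEq_zero_iff_dvd.mpr (dvd_mul_right _ _)
  have h₁ := eisNorm_nonneg a' b'
  have h₂ := eisNorm_nonneg c' d'
  have hk₀ : k ≠ 0 := by
    rintro rfl
    obtain ⟨rfl, rfl⟩ := eisNorm_eq_zero_iff.mp (by linarith : eisNorm a' b' = 0)
    obtain ⟨rfl, rfl⟩ := eisNorm_eq_zero_iff.mp (by linarith : eisNorm c' d' = 0)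
    obtain ⟨a₁, rfl⟩ := Int.modEq_zero_iff_dvd.mp ha.symm
    obtain ⟨b₁, rfl⟩ := Int.modEq_zero_iff_dvd.mp hb.symm
    obtain ⟨c₁, rfl⟩ := Int.modEq_zero_iff_dvd.mp hc.symm
    obtain ⟨d₁, rfl⟩ := Int.modEq_zero_iff_dvd.mp hd.symm
    have hmp : (m : ℤ) ∣ p :=
      ⟨eisNorm a₁ b₁ + eisNorm c₁ d₁, mul_left_cancel₀ hm₀ (by rw [← hx]; unfold eisNorm; ring)⟩
    rcases hp.eq_one_or_self_of_dvd m (by exact_mod_cast hmp) with h | h <;> omega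
  lift k to ℕ using by nlinarith
  refine ⟨k, by nlinarith, by omega, ?_⟩
  rw [mul_comm]
  exact isSumTwoEisNorms_mul_of_modEq hm₀ ha hb hc hd hx hk

lemma exists_isSumTwoEisNorms_mul_of_prime {p : ℕ} (hp : p.Prime) (hp₂ : p ≠ 2) :
    ∃ m < p, 0 < m ∧ IsSumTwoEisNorms (m * p) := by
  have := Fact.mk hp
  obtain ⟨a, b, ha, hb, hab⟩ := Nat.sq_add_sq_zmodEq p (-3)
  obtain ⟨m, hm⟩ := Int.modEq_iff_dvd.mp hab.symm
  have hp₃ : 3 ≤ p := by have := hp.two_le; omega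
  have hm₀ : 0 ≤ m := by nlinarith
  lift m to ℕ using hm₀
  refine ⟨m, ?_, ?_, a + 1, -2, b, 0, by unfold eisNorm; linear_combination hm⟩
  · have ha₂ : (2 * a : ℤ) ≤ p := by omega
    have hb₂ : (2 * b : ℤ) ≤ p := by omega
    have : (p * m : ℤ) < p * p := by nlinarith
    exact_mod_cast lt_of_mul_lt_mul_left this (by positivity)
  · have : (0 : ℤ) < p * m := by nlinarith
    exact_mod_cast pos_of_mul_pos_right this (by positivity)

lemma isSumTwoEisNorms_of_prime {p : ℕ} (hp : p.Prime) : IsSumTwoEisNorms p := by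
  rcases eq_or_ne p 2 with rfl | hp₂
  · exact ⟨1, 0, 1, 0, by norm_num [eisNorm]⟩
  suffices ∀ m, 0 < m → m < p → IsSumTwoEisNorms (m * p) → IsSumTwoEisNorms p by
    obtain ⟨m, hmp, hm, h⟩ := exists_isSumTwoEisNorms_mul_of_prime hp hp₂
    exact this m hm hmp h
  intro m
  induction m using Nat.strong_induction_on with
  | _ m ih =>
    intro hm hmp h
    rcases (show m = 1 ∨ 1 < m by omega) with rfl | hm₁
    · simpa using h
    obtain ⟨k, hkm, hk, hkp⟩ := exists_lt_isSumTwoEisNorms_mul hp hm₁ hmp h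
    exact ih k hkm hk (hkm.trans hmp) hkp

lemma isSumTwoEisNorms_natCast (n : ℕ) : IsSumTwoEisNorms n := by
  induction n using Nat.recOnMul with
  | zero => exact ⟨0, 0, 0, 0, by norm_num [eisNorm]⟩
  | one => exact ⟨1, 0, 0, 0, by norm_num [eisNorm]⟩
  | prime p hp => exact isSumTwoEisNorms_of_prime hp
  | mul a b ha hb => exact_mod_cast ha.mul hb

theorem stmt_17_general (n : ℕ) :
    ∃ x₁ x₂ y₁ y₂ : ℤ,
      x₁ ^ 2 + x₁ * x₂ + x₂ ^ 2 + y₁ ^ 2 + y₁ * y₂ + y₂ ^ 2 = (n : ℤ) := by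
  obtain ⟨a, b, c, d, h⟩ := isSumTwoEisNorms_natCast n
  exact ⟨a, b, c, d, by rw [← h]; unfold eisNorm; ring⟩

theorem stmt_17 (n : ℕ) (hn : 0 < n) :
    ∃ x₁ x₂ y₁ y₂ : ℤ,
      x₁ ^ 2 + x₁ * x₂ + x₂ ^ 2 + y₁ ^ 2 + y₁ * y₂ + y₂ ^ 2 = (n : ℤ) :=
  stmt_17_general n
end
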